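/- The matrix Φ is Hermitian (its conjugate transpose equals Φ) and satisfies Φ * η * Φ = η; consequently Φ is invertible with inverse Φ⁻¹ = η * Φ * η. -/

import Mathlib

open Complex ComplexConjugate Matrix

/-- The `SU(2,1)` metric `η = diag(-1, 1, 1)`. -/
noncomputable def etaM : Matrix (Fin 3) (Fin 3) ℂ :=
  Matrix.diagonal ![-1, 1, 1]

/-- The vector `v` built from the Ernst potential `ℰ = -X - Λ conj(Λ) + i Y`
and the electromagnetic potential `Λ`:
`v = (2√X)⁻¹ (ℰ - 1, 2Λ, ℰ + 1)`. -/
noncomputable def vE (X Y : ℝ) (Λ : ℂ) : Fin 3 → ℂ :=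
  let ℰ : ℂ := -(X : ℂ) - Λ * conj Λ + Complex.I * Y
  ![(ℰ - 1) / (2 * Real.sqrt X), Λ / Real.sqrt X, (ℰ + 1) / (2 * Real.sqrt X)]

/-- The hermitian matrix `Φ` of the Mazur construction:
`Φ_{ab} = η_{ab} + 2 conj(v_a) v_b`. -/
noncomputable def PhiM (X Y : ℝ) (Λ : ℂ) : Matrix (Fin 3) (Fin 3) ℂ :=
  Matrix.of fun a b => etaM a b + 2 * conj (vE X Y Λ a) * vE X Y Λ b

/-!
`Φ = η + 2 v̄ vᵀ` is Hermitian because `η` is real diagonal and `v̄ vᵀ` is Hermitian. Expanding,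
`ΦηΦ = η + 4 (1 + vᵀ η v̄) v̄ vᵀ`, so `ΦηΦ = η` amounts to `-|v₀|² + |v₁|² + |v₂|² = -1`; this holds
because `|ℰ + 1|² - |ℰ - 1|² = 4 Re ℰ = -4 (X + |Λ|²)`. Since `η² = 1`, the relation `ΦηΦ = η`
says exactly that `ηΦη` is a two-sided inverse of `Φ`.
-/

section Monoid

variable {M : Type*} [Monoid M] {η a : M}

theorem mul_mul_mul_eq_one_of_mul_mul_eq (hη : η * η = 1) (ha : a * η * a = η) :
    a * (η * a * η) = 1 := by
  rw [← mul_assoc, ← mul_assoc, ha, hη]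

theorem mul_mul_mul_eq_one_of_mul_mul_eq' (hη : η * η = 1) (ha : a * η * a = η) :
    η * a * η * a = 1 := by
  rw [mul_assoc (η * a), mul_assoc, ← mul_assoc a, ha, hη]

theorem isUnit_of_mul_mul_eq (hη : η * η = 1) (ha : a * η * a = η) : IsUnit a :=
  isUnit_iff_exists.mpr ⟨η * a * η, mul_mul_mul_eq_one_of_mul_mul_eq hη ha,
    by simpa only [mul_assoc] using mul_mul_mul_eq_one_of_mul_mul_eq' hη ha⟩

end Monoid

namespace Matrix

variable {n R : Type*}

theorem isHermitian_add_two_smul_vecMulVec_star_self [CommRing R] [StarRing R] {η : Matrix n n R}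
    (hη : η.IsHermitian) (v : n → R) : (η + (2 : R) • vecMulVec (star v) v).IsHermitian := by
  refine hη.add (IsHermitian.smul ?_ (IsSelfAdjoint.ofNat 2))
  simp [IsHermitian, conjTranspose_vecMulVec]

theorem add_two_smul_vecMulVec_mul_mul_self [Fintype n] [DecidableEq n] [CommRing R]
    {η : Matrix n n R} (hη : η * η = 1) {u v : n → R} (huv : v ⬝ᵥ η *ᵥ u = -1) :
    (η + (2 : R) • vecMulVec u v) * η * (η + (2 : R) • vecMulVec u v) = η := by
  have hA : vecMulVec u v * η * vecMulVec u v = -vecMulVec u v := by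
    rw [vecMulVec_mul, vecMulVec_mul_vecMulVec, ← dotProduct_mulVec, huv, neg_one_smul,
      vecMulVec_neg]
  simp only [two_smul, add_mul, mul_add, mul_assoc, hη, mul_one]
  simp only [← mul_assoc, hA, one_mul]
  abel

end Matrix

theorem etaM_mul_etaM : etaM * etaM = 1 := by
  rw [etaM, diagonal_mul_diagonal, ← diagonal_one]
  congr 1
  ext i
  fin_cases i <;> norm_num

theorem isHermitian_etaM : etaM.IsHermitian :=
  isHermitian_diagonal_of_self_adjoint _ (by ext i; fin_cases i <;> simp)

theorem PhiM_eq_etaM_add (X Y : ℝ) (Λ : ℂ) :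
    PhiM X Y Λ = etaM + (2 : ℂ) • vecMulVec (star (vE X Y Λ)) (vE X Y Λ) := by
  ext a b
  simp [PhiM, vecMulVec_apply, mul_assoc]

theorem vE_dotProduct_etaM_mulVec_star {X : ℝ} (hX : 0 < X) (Y : ℝ) (Λ : ℂ) :
    vE X Y Λ ⬝ᵥ etaM *ᵥ star (vE X Y Λ) = -1 := by
  have hs : (Real.sqrt X : ℂ) ≠ 0 := by exact_mod_cast (Real.sqrt_pos.mpr hX).ne'
  have hX2 : (X : ℂ) = (Real.sqrt X : ℂ) ^ 2 := by
    norm_cast; rw [Real.sq_sqrt hX.le]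
  simp only [dotProduct, vE, etaM, mulVec_diagonal, Pi.star_apply, RCLike.star_def,
    Fin.sum_univ_three, Fin.isValue, cons_val_zero, cons_val_one, cons_val, map_div₀, map_sub,
    map_add, map_neg, map_mul, map_one, map_ofNat, conj_ofReal, conj_I, RingHomCompTriple.comp_apply,
    RingHom.id_apply, neg_mul, one_mul, mul_neg]
  rw [hX2]
  field_simp
  ring

/-- `Φ` is Hermitian and satisfies `Φ η Φ = η`; consequently it is invertible
with inverse `Φ⁻¹ = η Φ η`. -/
theorem PhiM_hermitian_eta_inverse (X Y : ℝ) (hX : 0 < X) (Λ : ℂ) :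
    (PhiM X Y Λ)ᴴ = PhiM X Y Λ ∧
      PhiM X Y Λ * etaM * PhiM X Y Λ = etaM ∧
      IsUnit (PhiM X Y Λ) ∧
      (PhiM X Y Λ)⁻¹ = etaM * PhiM X Y Λ * etaM := by
  have hherm : (PhiM X Y Λ)ᴴ = PhiM X Y Λ := by
    rw [PhiM_eq_etaM_add]
    exact isHermitian_add_two_smul_vecMulVec_star_self isHermitian_etaM _
  have hpres : PhiM X Y Λ * etaM * PhiM X Y Λ = etaM := by
    rw [PhiM_eq_etaM_add]
    exact add_two_smul_vecMulVec_mul_mul_self etaM_mul_etaM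
      (vE_dotProduct_etaM_mulVec_star hX Y Λ)
  exact ⟨hherm, hpres, isUnit_of_mul_mul_eq etaM_mul_etaM hpres,
    inv_eq_right_inv (mul_mul_mul_eq_one_of_mul_mul_eq etaM_mul_etaM hpres)⟩
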